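/- Let H be a real Hilbert space, V a closed subspace with orthogonal projection P : H → V, a, v ∈ H, and suppose φ = ∠(v,V⊥) with ∠(v,V⊥) ≥ π/2. Then P[C_H(a, v, φ)] = C_V(Pa, Pv, φ), i.e. the orthogonal projection of the cone onto V is the cone in V with apex Pa, axis Pv and the same half-aperture φ (in particular, when v ∈ V, v ≠ 0 and φ = π/2 this is the closed half-space {y ∈ V : ⟨y − Pa, v⟩ ≥ 0}). -/

import Mathlib

open scoped RealInnerProductSpace Classical

/-- The angle between a vector `v` and the orthogonal complement of `V`:
`∠(v,V⊥) = arccos (‖v - P v‖ / ‖v‖)` for `v ≠ 0` and `V ≠ H`, with the conventions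
`∠(v,V⊥) = π` when `v = 0` or `V = H`. -/
noncomputable def angleToPerp {H : Type*} [NormedAddCommGroup H] [InnerProductSpace ℝ H]
    [CompleteSpace H] (V : Submodule ℝ H) [CompleteSpace V] (v : H) : ℝ :=
  if v = 0 ∨ V = ⊤ then Real.pi
  else Real.arccos (‖v - (V.orthogonalProjection v : H)‖ / ‖v‖)

/-!
Away from the conventional value `π`, the angle `∠(v,V⊥)` is the arccosine of a nonnegative
number, hence at most `π/2`, with equality exactly when `v ∈ V`. So the hypothesis leaves two
cases. If `φ = π` the cone is all of `H` and the claim is `P[H] = V`. If `v ∈ V` and `φ = π/2`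
the cone is a half-space whose normal `v` lies in `V`; then `⟪u - a, v⟫ = ⟪P u - P a, v⟫`, and a
point `y ∈ V` lifts to `y + (a - P a)`, which has the same inner product with `v`.
-/

theorem angleToPerp_eq_pi_or_of_pi_div_two_le {H : Type*} [NormedAddCommGroup H]
    [InnerProductSpace ℝ H] [CompleteSpace H] {V : Submodule ℝ H} [CompleteSpace V] {v : H}
    (h : Real.pi / 2 ≤ angleToPerp V v) :
    angleToPerp V v = Real.pi ∨ (v ∈ V ∧ angleToPerp V v = Real.pi / 2) := by
  unfold angleToPerp at h ⊢
  split_ifs at h ⊢ with hdeg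
  · exact Or.inl rfl
  have hratio : ‖v - V.starProjection v‖ / ‖v‖ = 0 := by
    simp only [Submodule.coe_orthogonalProjectionOnto_apply] at h
    exact Real.arccos_eq_pi_div_two.mp
      (le_antisymm (Real.arccos_le_pi_div_two.mpr (by positivity)) h)
  have hfix : V.starProjection v = v := by
    rw [div_eq_zero_iff, norm_eq_zero, norm_eq_zero, sub_eq_zero] at hratio
    exact hratio.resolve_right (not_or.mp hdeg).1 |>.symm
  refine Or.inr ⟨Submodule.starProjection_eq_self_iff.mp hfix, ?_⟩
  simp only [Submodule.coe_orthogonalProjectionOnto_apply, hratio, Real.arccos_zero]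

namespace Submodule

variable {E : Type*} [NormedAddCommGroup E] [InnerProductSpace ℝ E] (K : Submodule ℝ E)
  [K.HasOrthogonalProjection]

theorem inner_starProjection_sub_starProjection_of_mem {w : E} (hw : w ∈ K) (u a : E) :
    ⟪K.starProjection u - K.starProjection a, w⟫ = ⟪u - a, w⟫ := by
  have horth : ⟪u - a - K.starProjection (u - a), w⟫ = 0 := K.starProjection_inner_eq_zero _ _ hw
  rw [inner_sub_left, sub_eq_zero, map_sub] at horth
  exact horth.symm

theorem starProjection_add_sub_starProjection {y : E} (hy : y ∈ K) (a : E) :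
    K.starProjection (y + (a - K.starProjection a)) = y := by
  rw [map_add, map_sub, starProjection_eq_self_iff.mpr (K.starProjection_apply_mem a), sub_self,
    add_zero, starProjection_eq_self_iff.mpr hy]

theorem image_starProjection_setOf_le_inner {w : E} (hw : w ∈ K) (a : E) (c : ℝ) :
    K.starProjection '' {u | c ≤ ⟪u - a, w⟫} = {y | y ∈ K ∧ c ≤ ⟪y - K.starProjection a, w⟫} := by
  ext y
  constructor
  · rintro ⟨u, hu, rfl⟩
    exact ⟨K.starProjection_apply_mem u, by
      rwa [K.inner_starProjection_sub_starProjection_of_mem hw]⟩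
  · rintro ⟨hy, hc⟩
    refine ⟨y + (a - K.starProjection a), ?_, K.starProjection_add_sub_starProjection hy a⟩
    rwa [Set.mem_ofPred_eq, show y + (a - K.starProjection a) - a = y - K.starProjection a by abel]

end Submodule

/-- If `φ = ∠(v,V⊥)` and `∠(v,V⊥) ≥ π/2`, then
`P[C_H(a,v,φ)] = C_V(P a, P v, φ)`, the cone in `V` with apex `P a`, axis `P v` and the
same half-aperture `φ`. -/
theorem stmt11 {H : Type*} [NormedAddCommGroup H] [InnerProductSpace ℝ H] [CompleteSpace H]
    (V : Submodule ℝ H) [CompleteSpace V]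
    (a v : H) (φ : ℝ) (hφψ : φ = angleToPerp V v) (hψ : Real.pi / 2 ≤ angleToPerp V v) :
    (fun u : H => (V.orthogonalProjection u : H)) ''
        {u : H | ⟪u - a, v⟫ ≥ Real.cos φ * (‖u - a‖ * ‖v‖)} =
      {y : H | y ∈ V ∧ ⟪y - (V.orthogonalProjection a : H), (V.orthogonalProjection v : H)⟫ ≥
        Real.cos φ * (‖y - (V.orthogonalProjection a : H)‖ *
          ‖(V.orthogonalProjection v : H)‖)} := by
  subst hφψ
  simp only [Submodule.coe_orthogonalProjectionOnto_apply, ge_iff_le]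
  rcases angleToPerp_eq_pi_or_of_pi_div_two_le hψ with hπ | ⟨hv, hπ2⟩
  · have hcone : ∀ x y : H, Real.cos Real.pi * (‖x‖ * ‖y‖) ≤ ⟪x, y⟫ := fun x y => by
      rw [Real.cos_pi, neg_one_mul]
      exact neg_le_of_abs_le (abs_real_inner_le_norm x y)
    simp only [hπ, hcone, Set.ofPred_true, Set.image_univ, and_true]
    exact congrArg SetLike.coe V.range_starProjection
  · rw [hπ2, Real.cos_pi_div_two, Submodule.starProjection_eq_self_iff.mpr hv]
    simp only [zero_mul]
    exact V.image_starProjection_setOf_le_inner hv a 0
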